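/- Let (G,ν) be a weighted graph with controlled weights, let β≥2 and Ψ(R)=R^β. If (G,ν) satisfies (VD), PI(Ψ) and CS(Ψ), then (G,ν) satisfies the resistance estimate RES(Ψ). -/
import Mathlib


open scoped Classical ENNReal

noncomputable section

/-- A weighted graph: a countably infinite, locally finite, connected simple graph
with symmetric nonnegative edge weights `nu`, positive exactly on edges. -/
structure WeightedGraph (V : Type*) [Countable V] [Infinite V] where
  G : SimpleGraph V
  connected : G.Connected
  locallyFinite : ∀ x : V, (G.neighborSet x).Finite
  ball_finite : ∀ (x : V) (r : ℝ), {y : V | (G.dist x y : ℝ) < r}.Finite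
  nu : V → V → ℝ
  nu_symm : ∀ x y, nu x y = nu y x
  nu_nonneg : ∀ x y, 0 ≤ nu x y
  nu_pos_iff : ∀ x y, 0 < nu x y ↔ G.Adj x y

namespace WeightedGraph

variable {V : Type*} [Countable V] [Infinite V] (W : WeightedGraph V)

/-- The vertex weight `ν_x = Σ_y ν_{xy}`. -/
def nuV (x : V) : ℝ := ∑ y ∈ (W.locallyFinite x).toFinset, W.nu x y

/-- The ball `B(x,r) = {y : d(x,y) < r}` (with respect to the graph distance),
as a finite set. -/
def ball (x : V) (r : ℝ) : Finset V := (W.ball_finite x r).toFinset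

/-- The volume `V(x,r) = ν(B(x,r))`. -/
def vol (x : V) (r : ℝ) : ℝ := ∑ y ∈ W.ball x r, W.nuV y

/-- `B̄(x,r)`: the ball together with its exterior boundary. -/
def cball (x : V) (r : ℝ) : Set V :=
  (W.ball x r : Set V) ∪ {z : V | ∃ y ∈ W.ball x r, W.G.Adj z y}

/-- `Γ(f,f)(x) = Σ_{y∼x} (f(x)-f(y))² ν_{xy}`. -/
def gamma (f : V → ℝ) (x : V) : ℝ :=
  ∑ y ∈ (W.locallyFinite x).toFinset, (f x - f y) ^ 2 * W.nu x y

/-- The graph Laplacian `Δf(x) = ν_x⁻¹ Σ_y ν_{xy} (f(y)-f(x))`. -/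
def lap (f : V → ℝ) (x : V) : ℝ :=
  (W.nuV x)⁻¹ * ∑ y ∈ (W.locallyFinite x).toFinset, W.nu x y * (f y - f x)

/-- Controlled weights: `ν_{xy} ≥ p₀ ν_x` whenever `x ∼ y`. -/
def ControlledWeights : Prop :=
  ∃ p₀ : ℝ, 0 < p₀ ∧ ∀ x y : V, W.G.Adj x y → p₀ * W.nuV x ≤ W.nu x y

/-- Volume doubling. -/
def VD : Prop :=
  ∃ C : ℝ, 0 < C ∧ ∀ (x : V) (R : ℝ), 0 < R → W.vol x (2 * R) ≤ C * W.vol x R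

/-- The weighted average of `f` over the ball `B(x,R)`. -/
def avg (f : V → ℝ) (x : V) (R : ℝ) : ℝ :=
  (W.vol x R)⁻¹ * ∑ y ∈ W.ball x R, f y * W.nuV y

/-- The Poincaré inequality `PI(Ψ)`. -/
def PI (Psi : ℝ → ℝ) : Prop :=
  ∃ C : ℝ, 0 < C ∧ ∀ (x : V) (R : ℝ), 1 ≤ R → ∀ f : V → ℝ,
    ∑ y ∈ W.ball x R, (f y - W.avg f x R) ^ 2 * W.nuV y ≤
      C * Psi R * ∑ y ∈ W.ball x R, W.gamma f y

/-- The cut-off Sobolev inequality `CS(Ψ)`. -/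
def CS (Psi : ℝ → ℝ) : Prop :=
  ∃ θ : ℝ, θ ∈ Set.Ioc (0 : ℝ) 1 ∧ ∃ c₁ : ℝ, 0 < c₁ ∧ ∃ c₂ : ℝ, 0 < c₂ ∧
    ∀ (x₀ : V) (R : ℝ), 1 ≤ R → ∃ φ : V → ℝ,
      (∀ x ∈ W.ball x₀ (R / 2), 1 ≤ φ x) ∧
      (∀ x, x ∉ W.ball x₀ R → φ x = 0) ∧
      (∀ x y : V, |φ x - φ y| ≤ c₁ * ((W.G.dist x y : ℝ) / R) ^ θ) ∧
      (∀ (x₁ : V) (s : ℝ), 1 ≤ s → s ≤ R → ∀ f : V → ℝ,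
        ∑ x ∈ W.ball x₁ s, (f x) ^ 2 * W.gamma φ x ≤
          c₂ * (s / R) ^ (2 * θ) *
            (∑ x ∈ W.ball x₁ (2 * s), W.gamma f x +
              (Psi s)⁻¹ * ∑ x ∈ W.ball x₁ (2 * s), W.nuV x * (f x) ^ 2))

/-- The parabolic Harnack inequality `PHI(Ψ)`. -/
def PHI (Psi : ℝ → ℝ) : Prop :=
  ∃ C : ℝ, 0 < C ∧ ∀ (x₀ : V) (R : ℝ), 1 ≤ R →
    ∀ u : ℝ → V → ℝ,
      (∀ t ∈ Set.Ioo (0 : ℝ) (4 * Psi R), ∀ x ∈ W.cball x₀ (2 * R), 0 ≤ u t x) →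
      (∀ x ∈ W.ball x₀ (2 * R), ∀ t ∈ Set.Ioo (0 : ℝ) (4 * Psi R),
        HasDerivAt (fun s : ℝ => u s x) (W.lap (u t) x) t) →
      ∀ t₁ ∈ Set.Ioo (Psi R) (2 * Psi R), ∀ x₁ ∈ W.ball x₀ R,
        ∀ t₂ ∈ Set.Ioo (3 * Psi R) (4 * Psi R), ∀ x₂ ∈ W.ball x₀ R,
          u t₁ x₁ ≤ C * u t₂ x₂

/-- The elliptic Harnack inequality `EHI`. -/
def EHI : Prop :=
  ∃ C : ℝ, 0 < C ∧ ∀ (x : V) (R : ℝ), 1 ≤ R → ∀ u : V → ℝ,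
    (∀ y ∈ W.cball x R, 0 ≤ u y) →
    (∀ y ∈ W.ball x R, W.lap u y = 0) →
    ∀ y₁ ∈ W.ball x (R / 2), ∀ y₂ ∈ W.ball x (R / 2), u y₁ ≤ C * u y₂

/-- The energy `(1/2) Σ_x Σ_y (f(x)-f(y))² ν_{xy}`, as an extended real. -/
def energy (f : V → ℝ) : ℝ≥0∞ :=
  (1 / 2 : ℝ≥0∞) * ∑' x : V, ∑' y : V, ENNReal.ofReal ((f x - f y) ^ 2 * W.nu x y)

/-- The inverse of the effective resistance between `A` and `B`. -/
def resInv (A B : Set V) : ℝ≥0∞ :=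
  ⨅ f ∈ {f : V → ℝ | (∀ x ∈ A, f x = 1) ∧ (∀ x ∈ B, f x = 0)}, W.energy f

/-- The effective resistance between `A` and `B`. -/
def reff (A B : Set V) : ℝ≥0∞ := (W.resInv A B)⁻¹

/-- The resistance estimate `RES(Ψ)`. -/
def RES (Psi : ℝ → ℝ) : Prop :=
  ∃ c₁ c₂ : ℝ, 0 < c₁ ∧ 0 < c₂ ∧ ∀ (x : V) (R : ℝ), 1 ≤ R →
    ENNReal.ofReal (c₁ * Psi R / W.vol x R) ≤
        W.reff (W.ball x R : Set V) ((W.ball x (2 * R) : Set V)ᶜ) ∧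
      W.reff (W.ball x R : Set V) ((W.ball x (2 * R) : Set V)ᶜ) ≤
        ENNReal.ofReal (c₂ * Psi R / W.vol x R)

/-- The heat kernel `p_t(x,y) = (exp(tΔ) 1_{y})(x) / ν_y`, where the operator
exponential is given by its (entrywise absolutely convergent) power series. -/
def heatKernel (t : ℝ) (x y : V) : ℝ :=
  (∑' n : ℕ, t ^ n / (n.factorial : ℝ) *
      (W.lap^[n] (fun z : V => if z = y then (1 : ℝ) else 0)) x) / W.nuV y

/-- The two-sided sub-Gaussian heat kernel estimate `HK(Ψ)` with `Ψ(R) = R^β`. -/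
def HK (β : ℝ) : Prop :=
  ∃ c₁ c₂ c₃ c₄ : ℝ, 0 < c₁ ∧ 0 < c₂ ∧ 0 < c₃ ∧ 0 < c₄ ∧
    ∀ (x y : V) (t : ℝ), max 1 (W.G.dist x y : ℝ) ≤ t →
      c₁ * Real.exp (-(((c₂ * (W.G.dist x y : ℝ)) ^ β / t) ^ (1 / (β - 1)))) /
          W.vol x (t ^ (1 / β)) ≤ W.heatKernel t x y ∧
        W.heatKernel t x y ≤
          c₃ * Real.exp (-(((c₄ * (W.G.dist x y : ℝ)) ^ β / t) ^ (1 / (β - 1)))) /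
            W.vol x (t ^ (1 / β))

end WeightedGraph

/-- A rough isometry between weighted graphs, viewed as metric measure spaces with
the graph distance and the measure `ν`. -/
def GraphRoughIsometry {V₁ V₂ : Type*} [Countable V₁] [Infinite V₁]
    [Countable V₂] [Infinite V₂]
    (W₁ : WeightedGraph V₁) (W₂ : WeightedGraph V₂) (φ : V₁ → V₂) : Prop :=
  ∃ C₁ C₂ C₃ : ℝ, 0 < C₁ ∧ 1 < C₂ ∧ 1 < C₃ ∧
    (∀ w : V₂, ∃ x : V₁, (W₂.G.dist (φ x) w : ℝ) < C₁) ∧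
    (∀ x y : V₁,
      C₂⁻¹ * ((W₁.G.dist x y : ℝ) - C₁) ≤ (W₂.G.dist (φ x) (φ y) : ℝ) ∧
        (W₂.G.dist (φ x) (φ y) : ℝ) ≤ C₂ * ((W₁.G.dist x y : ℝ) + C₁)) ∧
    (∀ x : V₁,
      C₃⁻¹ * W₁.vol x C₁ ≤ W₂.vol (φ x) C₁ ∧ W₂.vol (φ x) C₁ ≤ C₃ * W₁.vol x C₁)

end

section ResAuxiliary

namespace WeightedGraph

variable {V : Type*} [Countable V] [Infinite V] (W : WeightedGraph V)

lemma mem_ball_iff {x y : V} {r : ℝ} : y ∈ W.ball x r ↔ (W.G.dist x y : ℝ) < r := by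
  unfold WeightedGraph.ball
  rw [Set.Finite.mem_toFinset]
  rfl

lemma nu_eq_zero_of_not_adj {x y : V} (h : ¬ W.G.Adj x y) : W.nu x y = 0 :=
  le_antisymm (not_lt.mp (fun hp => h ((W.nu_pos_iff x y).mp hp))) (W.nu_nonneg x y)

lemma dist_triangle' (a b c : V) :
    (W.G.dist a c : ℝ) ≤ (W.G.dist a b : ℝ) + (W.G.dist b c : ℝ) := by
  exact_mod_cast W.connected.dist_triangle

lemma ball_mono {x : V} {r r' : ℝ} (h : r ≤ r') : W.ball x r ⊆ W.ball x r' := by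
  intro y hy
  rw [W.mem_ball_iff] at hy ⊢
  linarith

lemma nuV_nonneg (x : V) : 0 ≤ W.nuV x :=
  Finset.sum_nonneg fun y _ => W.nu_nonneg x y

lemma exists_adj (x : V) : ∃ y, W.G.Adj x y := by
  obtain ⟨y, hy⟩ := exists_ne x
  obtain ⟨p⟩ := (W.connected y x).symm
  cases p with
  | nil => exact absurd rfl hy
  | cons h _ => exact ⟨_, h⟩

lemma nuV_pos (x : V) : 0 < W.nuV x := by
  obtain ⟨y, hy⟩ := W.exists_adj x
  have hmem : y ∈ (W.locallyFinite x).toFinset := by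
    rw [Set.Finite.mem_toFinset]; exact hy
  have h1 : W.nu x y ≤ W.nuV x :=
    Finset.single_le_sum (fun z _ => W.nu_nonneg x z) hmem
  have h2 : 0 < W.nu x y := (W.nu_pos_iff x y).mpr hy
  linarith

lemma vol_nonneg (x : V) (r : ℝ) : 0 ≤ W.vol x r :=
  Finset.sum_nonneg fun y _ => W.nuV_nonneg y

lemma vol_mono_of_subset {x y : V} {r r' : ℝ} (h : W.ball x r ⊆ W.ball y r') :
    W.vol x r ≤ W.vol y r' :=
  Finset.sum_le_sum_of_subset_of_nonneg h fun z _ _ => W.nuV_nonneg z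

lemma vol_mono (x : V) {r r' : ℝ} (h : r ≤ r') : W.vol x r ≤ W.vol x r' :=
  W.vol_mono_of_subset (W.ball_mono h)

lemma self_mem_ball {x : V} {r : ℝ} (hr : 0 < r) : x ∈ W.ball x r := by
  rw [W.mem_ball_iff, SimpleGraph.dist_self]
  exact_mod_cast hr

lemma vol_pos (x : V) {r : ℝ} (hr : 0 < r) : 0 < W.vol x r :=
  Finset.sum_pos' (fun y _ => W.nuV_nonneg y) ⟨x, W.self_mem_ball hr, W.nuV_pos x⟩

lemma gamma_nonneg (f : V → ℝ) (x : V) : 0 ≤ W.gamma f x :=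
  Finset.sum_nonneg fun y _ => mul_nonneg (sq_nonneg _) (W.nu_nonneg x y)

lemma gamma_const (c : ℝ) (x : V) : W.gamma (fun _ => c) x = 0 := by
  unfold WeightedGraph.gamma
  simp

lemma gamma_min_le (f : V → ℝ) (x : V) :
    W.gamma (fun y => min (f y) 1) x ≤ W.gamma f x := by
  unfold WeightedGraph.gamma
  refine Finset.sum_le_sum fun y _ => ?_
  refine mul_le_mul_of_nonneg_right ?_ (W.nu_nonneg x y)
  show (min (f x) 1 - min (f y) 1) ^ 2 ≤ (f x - f y) ^ 2
  rcases le_total (f x) 1 with h1 | h1 <;> rcases le_total (f y) 1 with h2 | h2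
  · rw [min_eq_left h1, min_eq_left h2]
  · rw [min_eq_left h1, min_eq_right h2]
    nlinarith [sq_nonneg (f y - 1), mul_nonneg (sub_nonneg.2 h2) (sub_nonneg.2 h1)]
  · rw [min_eq_right h1, min_eq_left h2]
    nlinarith [sq_nonneg (f x - 1), mul_nonneg (sub_nonneg.2 h1) (sub_nonneg.2 h2)]
  · rw [min_eq_right h1, min_eq_right h2]
    nlinarith [sq_nonneg (f x - f y)]

lemma energy_eq (f : V → ℝ) :
    W.energy f = 2⁻¹ * ∑' x, ENNReal.ofReal (W.gamma f x) := by
  unfold WeightedGraph.energy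
  congr 1
  · rw [one_div]
  · refine tsum_congr fun x => ?_
    rw [tsum_eq_sum (s := (W.locallyFinite x).toFinset) ?_]
    · exact (ENNReal.ofReal_sum_of_nonneg fun y _ =>
        mul_nonneg (sq_nonneg _) (W.nu_nonneg x y)).symm
    · intro y hy
      have hadj : ¬ W.G.Adj x y := by
        rw [Set.Finite.mem_toFinset] at hy; exact hy
      rw [W.nu_eq_zero_of_not_adj hadj, mul_zero, ENNReal.ofReal_zero]

lemma le_energy (f : V → ℝ) (T : Finset V) :
    ENNReal.ofReal (2⁻¹ * ∑ y ∈ T, W.gamma f y) ≤ W.energy f := by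
  rw [W.energy_eq, ENNReal.ofReal_mul (by norm_num)]
  have h2 : ENNReal.ofReal (2⁻¹ : ℝ) = 2⁻¹ := by
    rw [ENNReal.ofReal_inv_of_pos (by norm_num)]
    norm_num
  rw [h2]
  refine mul_le_mul_right ?_ _
  calc ENNReal.ofReal (∑ y ∈ T, W.gamma f y)
      = ∑ y ∈ T, ENNReal.ofReal (W.gamma f y) :=
        ENNReal.ofReal_sum_of_nonneg fun y _ => W.gamma_nonneg f y
    _ ≤ ∑' y, ENNReal.ofReal (W.gamma f y) := ENNReal.sum_le_tsum T

lemma energy_le_of_support (f : V → ℝ) (S : Finset V) (hf : ∀ z, z ∉ S → f z = 0) :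
    W.energy f ≤ ENNReal.ofReal (∑ y ∈ S, W.gamma f y) := by
  classical
  set S' : Finset V := S ∪ S.biUnion (fun y => (W.locallyFinite y).toFinset) with hS'
  have hSS' : S ⊆ S' := Finset.subset_union_left
  have hgamma0 : ∀ z, z ∉ S' → W.gamma f z = 0 := by
    intro z hz
    have hzS : z ∉ S := fun h => hz (hSS' h)
    refine Finset.sum_eq_zero fun y hy => ?_
    by_cases hnu : W.nu z y = 0
    · rw [hnu, mul_zero]
    · have hpos : 0 < W.nu z y := lt_of_le_of_ne (W.nu_nonneg z y) (Ne.symm hnu)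
      have hAdj : W.G.Adj z y := (W.nu_pos_iff z y).mp hpos
      have hyS : y ∉ S := by
        intro hyS
        refine hz (Finset.mem_union_right _ (Finset.mem_biUnion.mpr ⟨y, hyS, ?_⟩))
        rw [Set.Finite.mem_toFinset]
        exact hAdj.symm
      rw [hf z hzS, hf y hyS]
      simp
  have htsum : ∑' z, ENNReal.ofReal (W.gamma f z)
      = ∑ z ∈ S', ENNReal.ofReal (W.gamma f z) :=
    tsum_eq_sum fun z hz => by rw [hgamma0 z hz, ENNReal.ofReal_zero]
  have hzform : ∀ z ∈ S' \ S, W.gamma f z = ∑ y ∈ S, (f y) ^ 2 * W.nu z y := by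
    intro z hz
    have hzS : z ∉ S := (Finset.mem_sdiff.mp hz).2
    have e1 : ∑ y ∈ (W.locallyFinite z).toFinset ∩ S, (f z - f y) ^ 2 * W.nu z y
        = ∑ y ∈ (W.locallyFinite z).toFinset, (f z - f y) ^ 2 * W.nu z y := by
      refine Finset.sum_subset Finset.inter_subset_left fun y hy hy' => ?_
      have hyS : y ∉ S := fun h => hy' (Finset.mem_inter.mpr ⟨hy, h⟩)
      rw [hf z hzS, hf y hyS]
      simp
    have e2 : ∑ y ∈ (W.locallyFinite z).toFinset ∩ S, (f y) ^ 2 * W.nu z y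
        = ∑ y ∈ S, (f y) ^ 2 * W.nu z y := by
      refine Finset.sum_subset Finset.inter_subset_right fun y hy hy' => ?_
      have hyn : y ∉ (W.locallyFinite z).toFinset :=
        fun h => hy' (Finset.mem_inter.mpr ⟨h, hy⟩)
      have hadj : ¬ W.G.Adj z y := by
        rw [Set.Finite.mem_toFinset] at hyn; exact hyn
      rw [W.nu_eq_zero_of_not_adj hadj, mul_zero]
    unfold WeightedGraph.gamma
    rw [← e1, ← e2]
    refine Finset.sum_congr rfl fun y _ => ?_
    rw [hf z hzS]
    ring
  have hkey : ∑ z ∈ S' \ S, W.gamma f z ≤ ∑ y ∈ S, W.gamma f y := by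
    calc ∑ z ∈ S' \ S, W.gamma f z
        = ∑ z ∈ S' \ S, ∑ y ∈ S, (f y) ^ 2 * W.nu z y := Finset.sum_congr rfl hzform
      _ = ∑ y ∈ S, ∑ z ∈ S' \ S, (f y) ^ 2 * W.nu z y := Finset.sum_comm
      _ ≤ ∑ y ∈ S, W.gamma f y := by
          refine Finset.sum_le_sum fun y _ => ?_
          have e3 : ∑ z ∈ (S' \ S) ∩ (W.locallyFinite y).toFinset, (f y) ^ 2 * W.nu z y
              = ∑ z ∈ S' \ S, (f y) ^ 2 * W.nu z y := by
            refine Finset.sum_subset Finset.inter_subset_left fun z hz hz' => ?_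
            have hzn : z ∉ (W.locallyFinite y).toFinset :=
              fun h => hz' (Finset.mem_inter.mpr ⟨hz, h⟩)
            have hadj : ¬ W.G.Adj z y := by
              rw [Set.Finite.mem_toFinset] at hzn
              exact fun h => hzn h.symm
            rw [W.nu_eq_zero_of_not_adj hadj, mul_zero]
          rw [← e3]
          unfold WeightedGraph.gamma
          calc ∑ z ∈ (S' \ S) ∩ (W.locallyFinite y).toFinset, (f y) ^ 2 * W.nu z y
              = ∑ z ∈ (S' \ S) ∩ (W.locallyFinite y).toFinset,
                  (f y - f z) ^ 2 * W.nu y z := by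
                refine Finset.sum_congr rfl fun z hz => ?_
                have hzS : z ∉ S :=
                  (Finset.mem_sdiff.mp (Finset.mem_inter.mp hz).1).2
                rw [hf z hzS, W.nu_symm z y]
                ring
            _ ≤ ∑ z ∈ (W.locallyFinite y).toFinset, (f y - f z) ^ 2 * W.nu y z :=
                Finset.sum_le_sum_of_subset_of_nonneg Finset.inter_subset_right
                  fun z _ _ => mul_nonneg (sq_nonneg _) (W.nu_nonneg y z)
  have hS'sum : ∑ z ∈ S', W.gamma f z ≤ 2 * ∑ y ∈ S, W.gamma f y := by
    have := (Finset.sum_sdiff hSS' (f := W.gamma f)).symm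
    rw [this]
    linarith
  rw [W.energy_eq, htsum,
    ← ENNReal.ofReal_sum_of_nonneg (fun z _ => W.gamma_nonneg f z)]
  calc 2⁻¹ * ENNReal.ofReal (∑ z ∈ S', W.gamma f z)
      ≤ 2⁻¹ * ENNReal.ofReal (2 * ∑ y ∈ S, W.gamma f y) :=
        mul_le_mul_right (ENNReal.ofReal_le_ofReal hS'sum) _
    _ = ENNReal.ofReal (∑ y ∈ S, W.gamma f y) := by
        rw [ENNReal.ofReal_mul (by norm_num : (0:ℝ) ≤ 2)]
        rw [ENNReal.ofReal_ofNat, ← mul_assoc,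
          ENNReal.inv_mul_cancel (by norm_num) (by norm_num), one_mul]

lemma exists_dist_eq (x : V) (n : ℕ) : ∃ z : V, W.G.dist x z = n := by
  have hfin := W.ball_finite x ((n : ℝ) + 1)
  obtain ⟨w, hw⟩ := hfin.infinite_compl.nonempty
  have hnw : n ≤ W.G.dist x w := by
    have h1 : ¬ ((W.G.dist x w : ℝ) < (n : ℝ) + 1) := hw
    have h2 : (n : ℝ) + 1 ≤ (W.G.dist x w : ℝ) := not_lt.mp h1
    exact_mod_cast le_trans (by linarith : (n : ℝ) ≤ (n : ℝ) + 1) h2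
  obtain ⟨p, hp⟩ := W.connected.exists_walk_length_eq_dist x w
  have hup : ∀ m, W.G.dist x (p.getVert m) ≤ m := by
    intro m
    induction m with
    | zero => simp [SimpleGraph.Walk.getVert_zero, SimpleGraph.dist_self]
    | succ m ih =>
      by_cases hm : m < p.length
      · have hadj := p.adj_getVert_succ hm
        have htri := W.connected.dist_triangle (u := x) (v := p.getVert m)
          (w := p.getVert (m + 1))
        have h1 : W.G.dist (p.getVert m) (p.getVert (m + 1)) = 1 :=
          SimpleGraph.dist_eq_one_iff_adj.mpr hadj
        omega
      · have h1 : p.getVert (m + 1) = w := p.getVert_of_length_le (by omega)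
        have h2 : p.getVert m = w := p.getVert_of_length_le (by omega)
        rw [h1, ← h2]
        omega
  have hdown : ∀ m, W.G.dist (p.getVert (p.length - m)) w ≤ m := by
    intro m
    induction m with
    | zero =>
      rw [Nat.sub_zero, p.getVert_length]
      simp [SimpleGraph.dist_self]
    | succ m ih =>
      by_cases hm : m + 1 ≤ p.length
      · have hi : p.length - (m + 1) < p.length := by omega
        have hadj := p.adj_getVert_succ hi
        have he : p.length - (m + 1) + 1 = p.length - m := by omega
        rw [he] at hadj
        have htri := W.connected.dist_triangle (u := p.getVert (p.length - (m + 1)))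
          (v := p.getVert (p.length - m)) (w := w)
        have h1 : W.G.dist (p.getVert (p.length - (m + 1))) (p.getVert (p.length - m)) = 1 :=
          SimpleGraph.dist_eq_one_iff_adj.mpr hadj
        omega
      · have he : p.length - (m + 1) = p.length - m := by omega
        rw [he]
        omega
  refine ⟨p.getVert n, le_antisymm (hup n) ?_⟩
  have hn : n ≤ p.length := by omega
  have h1 := hdown (p.length - n)
  rw [Nat.sub_sub_self hn] at h1
  have htri := W.connected.dist_triangle (u := x) (v := p.getVert n) (w := w)
  omega

end WeightedGraph

end ResAuxiliary

/-- If a weighted graph with controlled weights satisfies VD, PI(Ψ) and CS(Ψ)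
with Ψ(R) = R^β, β ≥ 2, then it satisfies the resistance estimate RES(Ψ). -/
theorem vd_pi_cs_implies_res {V : Type*} [Countable V] [Infinite V]
    (W : WeightedGraph V) (hcw : W.ControlledWeights) (β : ℝ) (hβ : 2 ≤ β)
    (hVD : W.VD) (hPI : W.PI fun R => R ^ β) (hCS : W.CS fun R => R ^ β) :
    W.RES fun R => R ^ β := by
  classical
  obtain ⟨CV₀, hCV₀, hVD⟩ :
      ∃ C : ℝ, 0 < C ∧ ∀ (x : V) (R : ℝ), 0 < R → W.vol x (2 * R) ≤ C * W.vol x R := hVD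
  obtain ⟨CP, hCP, hPI⟩ :
      ∃ C : ℝ, 0 < C ∧ ∀ (x : V) (R : ℝ), 1 ≤ R → ∀ f : V → ℝ,
        ∑ y ∈ W.ball x R, (f y - W.avg f x R) ^ 2 * W.nuV y ≤
          C * R ^ β * ∑ y ∈ W.ball x R, W.gamma f y := hPI
  obtain ⟨θ, hθ, cs₁, hcs₁, cs₂, hcs₂, hCS⟩ :
      ∃ θ : ℝ, θ ∈ Set.Ioc (0 : ℝ) 1 ∧ ∃ c₁ : ℝ, 0 < c₁ ∧ ∃ c₂ : ℝ, 0 < c₂ ∧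
        ∀ (x₀ : V) (R : ℝ), 1 ≤ R → ∃ φ : V → ℝ,
          (∀ x ∈ W.ball x₀ (R / 2), 1 ≤ φ x) ∧
          (∀ x, x ∉ W.ball x₀ R → φ x = 0) ∧
          (∀ x y : V, |φ x - φ y| ≤ c₁ * ((W.G.dist x y : ℝ) / R) ^ θ) ∧
          (∀ (x₁ : V) (s : ℝ), 1 ≤ s → s ≤ R → ∀ f : V → ℝ,
            ∑ x ∈ W.ball x₁ s, (f x) ^ 2 * W.gamma φ x ≤
              c₂ * (s / R) ^ (2 * θ) *
                (∑ x ∈ W.ball x₁ (2 * s), W.gamma f x +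
                  (s ^ β)⁻¹ * ∑ x ∈ W.ball x₁ (2 * s), W.nuV x * (f x) ^ 2)) := hCS
  set CV : ℝ := max CV₀ 1 with hCVdef
  have hCV1 : (1 : ℝ) ≤ CV := le_max_right _ _
  have hCV0 : (0 : ℝ) < CV := lt_of_lt_of_le one_pos hCV1
  have hdb : ∀ (y : V) (r : ℝ), 0 < r → W.vol y (2 * r) ≤ CV * W.vol y r := fun y r hr =>
    le_trans (hVD y r hr) (mul_le_mul_of_nonneg_right (le_max_left _ _) (W.vol_nonneg y r))
  have hb8 : (0 : ℝ) < (8 : ℝ) ^ β := Real.rpow_pos_of_pos (by norm_num) β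
  have hd4 : ∀ (y : V) (r : ℝ), 0 < r → W.vol y (4 * r) ≤ CV ^ 2 * W.vol y r := by
    intro y r hr
    calc W.vol y (4 * r) = W.vol y (2 * (2 * r)) := by congr 1; ring
      _ ≤ CV * W.vol y (2 * r) := hdb y (2 * r) (by linarith)
      _ ≤ CV * (CV * W.vol y r) :=
          mul_le_mul_of_nonneg_left (hdb y r hr) hCV0.le
      _ = CV ^ 2 * W.vol y r := by ring
  have hd8 : ∀ (y : V) (r : ℝ), 0 < r → W.vol y (8 * r) ≤ CV ^ 3 * W.vol y r := by
    intro y r hr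
    calc W.vol y (8 * r) = W.vol y (2 * (4 * r)) := by congr 1; ring
      _ ≤ CV * W.vol y (4 * r) := hdb y (4 * r) (by linarith)
      _ ≤ CV * (CV ^ 2 * W.vol y r) :=
          mul_le_mul_of_nonneg_left (hd4 y r hr) hCV0.le
      _ = CV ^ 3 * W.vol y r := by ring
  show ∃ c₁ c₂ : ℝ, 0 < c₁ ∧ 0 < c₂ ∧ ∀ (x : V) (R : ℝ), 1 ≤ R →
      ENNReal.ofReal (c₁ * R ^ β / W.vol x R) ≤
          W.reff (W.ball x R : Set V) ((W.ball x (2 * R) : Set V))ᶜ ∧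
        W.reff (W.ball x R : Set V) ((W.ball x (2 * R) : Set V))ᶜ ≤
          ENNReal.ofReal (c₂ * R ^ β / W.vol x R)
  refine ⟨(cs₂ * CV ^ 2)⁻¹, 4 * CV ^ 3 * CP * (8 : ℝ) ^ β,
    inv_pos.mpr (mul_pos hcs₂ (pow_pos hCV0 2)),
    mul_pos (mul_pos (mul_pos (by norm_num) (pow_pos hCV0 3)) hCP) hb8,
    fun x R hR => ?_⟩
  have hR0 : (0 : ℝ) < R := lt_of_lt_of_le one_pos hR
  have hRb : (0 : ℝ) < R ^ β := Real.rpow_pos_of_pos hR0 β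
  have hV1 : (0 : ℝ) < W.vol x R := W.vol_pos x hR0
  have hβ0 : (0 : ℝ) ≤ β := by linarith
  constructor
  · -- lower bound on the effective resistance, via the CS cutoff function
    have h2R : (1 : ℝ) ≤ 2 * R := by linarith
    obtain ⟨φ, hφ1, hφ0, hφH, hφE⟩ := hCS x (2 * R) h2R
    set f : V → ℝ := fun y => min (φ y) 1 with hfdef
    have hf1 : ∀ y ∈ (W.ball x R : Set V), f y = 1 := by
      intro y hy
      have he : W.ball x (2 * R / 2) = W.ball x R := by congr 1; ring
      have hyb : y ∈ W.ball x (2 * R / 2) := by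
        rw [he]; exact Finset.mem_coe.mp hy
      exact min_eq_right (hφ1 y hyb)
    have hsupp : ∀ z, z ∉ W.ball x (2 * R) → f z = 0 := by
      intro z hz
      show min (φ z) 1 = 0
      rw [hφ0 z hz]
      exact min_eq_left zero_le_one
    have hf0 : ∀ y ∈ ((W.ball x (2 * R) : Set V))ᶜ, f y = 0 := fun y hy =>
      hsupp y (fun h => hy (Finset.mem_coe.mpr h))
    have hres : W.resInv (W.ball x R : Set V) ((W.ball x (2 * R) : Set V))ᶜ ≤ W.energy f :=
      iInf₂_le f ⟨hf1, hf0⟩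
    have hE1 : W.energy f ≤ ENNReal.ofReal (∑ y ∈ W.ball x (2 * R), W.gamma f y) :=
      W.energy_le_of_support f _ hsupp
    have hgs : ∑ y ∈ W.ball x (2 * R), W.gamma f y
        ≤ ∑ y ∈ W.ball x (2 * R), W.gamma φ y :=
      Finset.sum_le_sum fun y _ => W.gamma_min_le φ y
    have hne : (2 * R : ℝ) ≠ 0 := by positivity
    have hCSa := hφE x (2 * R) h2R le_rfl (fun _ => 1)
    rw [div_self hne, Real.one_rpow] at hCSa
    simp only [one_pow, one_mul, mul_one] at hCSa
    have hzero : ∑ y ∈ W.ball x (2 * (2 * R)), W.gamma (fun _ => (1 : ℝ)) y = 0 :=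
      Finset.sum_eq_zero fun y _ => W.gamma_const 1 y
    have hvolsum : ∑ y ∈ W.ball x (2 * (2 * R)), W.nuV y = W.vol x (4 * R) := by
      rw [show (2 * (2 * R) : ℝ) = 4 * R from by ring]
      rfl
    rw [hzero, hvolsum, zero_add] at hCSa
    have h2Rb : R ^ β ≤ (2 * R) ^ β := Real.rpow_le_rpow hR0.le (by linarith) hβ0
    have hV4 : W.vol x (4 * R) ≤ CV ^ 2 * W.vol x R := hd4 x R hR0
    have hga : ∑ y ∈ W.ball x (2 * R), W.gamma φ y
        ≤ cs₂ * CV ^ 2 * W.vol x R / R ^ β := by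
      have hinv : ((2 * R) ^ β)⁻¹ ≤ (R ^ β)⁻¹ := inv_anti₀ hRb h2Rb
      calc ∑ y ∈ W.ball x (2 * R), W.gamma φ y
          ≤ cs₂ * (((2 * R) ^ β)⁻¹ * W.vol x (4 * R)) := hCSa
        _ ≤ cs₂ * ((R ^ β)⁻¹ * (CV ^ 2 * W.vol x R)) := by
            refine mul_le_mul_of_nonneg_left ?_ hcs₂.le
            exact mul_le_mul hinv hV4 (W.vol_nonneg x (4 * R)) (inv_nonneg.mpr hRb.le)
        _ = cs₂ * CV ^ 2 * W.vol x R / R ^ β := by ring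
    have hresle : W.resInv (W.ball x R : Set V) ((W.ball x (2 * R) : Set V))ᶜ
        ≤ ENNReal.ofReal (cs₂ * CV ^ 2 * W.vol x R / R ^ β) :=
      le_trans hres (le_trans hE1 (ENNReal.ofReal_le_ofReal (le_trans hgs hga)))
    have hpos2 : (0 : ℝ) < cs₂ * CV ^ 2 * W.vol x R / R ^ β :=
      div_pos (mul_pos (mul_pos hcs₂ (pow_pos hCV0 2)) hV1) hRb
    have hinveq : (cs₂ * CV ^ 2 * W.vol x R / R ^ β)⁻¹
        = (cs₂ * CV ^ 2)⁻¹ * R ^ β / W.vol x R := by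
      rw [inv_div]
      field_simp
    unfold WeightedGraph.reff
    calc ENNReal.ofReal ((cs₂ * CV ^ 2)⁻¹ * R ^ β / W.vol x R)
        = (ENNReal.ofReal (cs₂ * CV ^ 2 * W.vol x R / R ^ β))⁻¹ := by
          rw [← ENNReal.ofReal_inv_of_pos hpos2, hinveq]
      _ ≤ (W.resInv (W.ball x R : Set V) ((W.ball x (2 * R) : Set V))ᶜ)⁻¹ :=
          ENNReal.inv_le_inv.mpr hresle
  · -- upper bound on the effective resistance, via the Poincaré inequality
    set n : ℕ := ⌈3 * R⌉₊ with hndef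
    have hn1 : 3 * R ≤ (n : ℝ) := Nat.le_ceil _
    have hn2 : (n : ℝ) < 3 * R + 1 := Nat.ceil_lt_add_one (by linarith)
    obtain ⟨z, hz⟩ := W.exists_dist_eq x n
    have hzR : (W.G.dist x z : ℝ) = (n : ℝ) := by rw [hz]
    have hsub1 : W.ball x R ⊆ W.ball x (8 * R) := W.ball_mono (by linarith)
    have hsub2 : W.ball z R ⊆ W.ball x (8 * R) := by
      intro y hy
      rw [W.mem_ball_iff] at hy ⊢
      have htr := W.dist_triangle' x z y
      rw [hzR] at htr
      linarith
    have hdisj : Disjoint (W.ball x R) (W.ball z R) := by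
      rw [Finset.disjoint_left]
      intro y hy hzy
      rw [W.mem_ball_iff] at hy hzy
      have h1 := W.dist_triangle' x y z
      have h2 : (W.G.dist y z : ℝ) = (W.G.dist z y : ℝ) := by
        rw [SimpleGraph.dist_comm]
      rw [hzR] at h1
      linarith
    have hf0ball : ∀ y ∈ W.ball z R, y ∉ W.ball x (2 * R) := by
      intro y hy hmem
      rw [W.mem_ball_iff] at hy hmem
      have h1 := W.dist_triangle' x y z
      have h2 : (W.G.dist y z : ℝ) = (W.G.dist z y : ℝ) := by
        rw [SimpleGraph.dist_comm]
      rw [hzR] at h1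
      linarith
    have hsub3 : W.ball x R ⊆ W.ball z (5 * R) := by
      intro y hy
      rw [W.mem_ball_iff] at hy ⊢
      have h1 := W.dist_triangle' z x y
      have h2 : (W.G.dist z x : ℝ) = (n : ℝ) := by
        rw [SimpleGraph.dist_comm]; exact hzR
      linarith
    have hVz : W.vol x R ≤ CV ^ 3 * W.vol z R :=
      calc W.vol x R ≤ W.vol z (5 * R) := W.vol_mono_of_subset hsub3
        _ ≤ W.vol z (8 * R) := W.vol_mono z (by linarith)
        _ ≤ CV ^ 3 * W.vol z R := hd8 z R hR0
    have hden : (0 : ℝ) < 4 * CV ^ 3 * CP * (8 : ℝ) ^ β * R ^ β :=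
      mul_pos (mul_pos (mul_pos (mul_pos (by norm_num) (pow_pos hCV0 3)) hCP) hb8) hRb
    have hkey : ∀ g : V → ℝ, (∀ y ∈ (W.ball x R : Set V), g y = 1) →
        (∀ y ∈ ((W.ball x (2 * R) : Set V))ᶜ, g y = 0) →
        ENNReal.ofReal (W.vol x R / (4 * CV ^ 3 * CP * (8 : ℝ) ^ β * R ^ β))
          ≤ W.energy g := by
      intro g hg1 hg0
      set m : ℝ := W.avg g x (8 * R) with hm
      have hPIa := hPI x (8 * R) (by linarith) g
      set G8 : ℝ := ∑ y ∈ W.ball x (8 * R), W.gamma g y with hG8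
      have hG8nn : 0 ≤ G8 := Finset.sum_nonneg fun y _ => W.gamma_nonneg g y
      have hsum1 : ∑ y ∈ W.ball x R, (g y - m) ^ 2 * W.nuV y
          = (1 - m) ^ 2 * W.vol x R := by
        unfold WeightedGraph.vol
        rw [Finset.mul_sum]
        refine Finset.sum_congr rfl fun y hy => ?_
        rw [hg1 y (Finset.mem_coe.mpr hy)]
      have hsum2 : ∑ y ∈ W.ball z R, (g y - m) ^ 2 * W.nuV y
          = m ^ 2 * W.vol z R := by
        unfold WeightedGraph.vol
        rw [Finset.mul_sum]
        refine Finset.sum_congr rfl fun y hy => ?_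
        have hgy : g y = 0 := hg0 y (fun hmem => hf0ball y hy (Finset.mem_coe.mp hmem))
        rw [hgy]
        ring
      have hsplit : (1 - m) ^ 2 * W.vol x R + m ^ 2 * W.vol z R
          ≤ ∑ y ∈ W.ball x (8 * R), (g y - m) ^ 2 * W.nuV y := by
        rw [← hsum1, ← hsum2, ← Finset.sum_union hdisj]
        exact Finset.sum_le_sum_of_subset_of_nonneg
          (Finset.union_subset hsub1 hsub2)
          (fun y _ _ => mul_nonneg (sq_nonneg _) (W.nuV_nonneg y))
      have hrw : ((8 : ℝ) * R) ^ β = (8 : ℝ) ^ β * R ^ β :=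
        Real.mul_rpow (by norm_num) hR0.le
      have hQ : (1 - m) ^ 2 * W.vol x R + m ^ 2 * W.vol z R
          ≤ CP * ((8 : ℝ) ^ β * R ^ β) * G8 := by
        rw [← hrw]
        exact le_trans hsplit hPIa
      have hmain : W.vol x R ≤ 2 * CV ^ 3 * (CP * ((8 : ℝ) ^ β * R ^ β) * G8) := by
        have hCV3 : (1 : ℝ) ≤ CV ^ 3 := one_le_pow₀ hCV1
        have e1 : 0 ≤ (CV ^ 3 - 1) * ((1 - m) ^ 2 * W.vol x R) :=
          mul_nonneg (by linarith) (mul_nonneg (sq_nonneg _) hV1.le)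
        have e2 : 0 ≤ m ^ 2 * (CV ^ 3 * W.vol z R - W.vol x R) :=
          mul_nonneg (sq_nonneg m) (by linarith)
        have e3 : 0 ≤ W.vol x R * (1 - 2 * m) ^ 2 :=
          mul_nonneg hV1.le (sq_nonneg _)
        nlinarith [hQ, e1, e2, e3]
      have hfrac : W.vol x R / (4 * CV ^ 3 * CP * (8 : ℝ) ^ β * R ^ β) ≤ 2⁻¹ * G8 := by
        rw [div_le_iff₀ hden]
        nlinarith [hmain]
      calc ENNReal.ofReal (W.vol x R / (4 * CV ^ 3 * CP * (8 : ℝ) ^ β * R ^ β))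
          ≤ ENNReal.ofReal (2⁻¹ * G8) := ENNReal.ofReal_le_ofReal hfrac
        _ ≤ W.energy g := W.le_energy g (W.ball x (8 * R))
    have hresge : ENNReal.ofReal (W.vol x R / (4 * CV ^ 3 * CP * (8 : ℝ) ^ β * R ^ β))
        ≤ W.resInv (W.ball x R : Set V) ((W.ball x (2 * R) : Set V))ᶜ :=
      le_iInf₂ fun g hg => hkey g hg.1 hg.2
    have hpos3 : (0 : ℝ) < W.vol x R / (4 * CV ^ 3 * CP * (8 : ℝ) ^ β * R ^ β) :=
      div_pos hV1 hden
    unfold WeightedGraph.reff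
    calc (W.resInv (W.ball x R : Set V) ((W.ball x (2 * R) : Set V))ᶜ)⁻¹
        ≤ (ENNReal.ofReal (W.vol x R / (4 * CV ^ 3 * CP * (8 : ℝ) ^ β * R ^ β)))⁻¹ :=
          ENNReal.inv_le_inv.mpr hresge
      _ = ENNReal.ofReal (4 * CV ^ 3 * CP * (8 : ℝ) ^ β * R ^ β / W.vol x R) := by
          rw [← ENNReal.ofReal_inv_of_pos hpos3, inv_div]
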